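/- Let H be n hyperplanes in ℝ^d in d'-relaxed general position and N the span of the normals. For any subset S_k ⊆ H of size 1 ≤ k ≤ d', the flat (⋂_{h∈S_k} h) ∩ N has dimension d' − k. -/

import Mathlib

open scoped RealInnerProductSpace Pointwise

noncomputable section

/-- The hyperplane in `ℝ^d` with normal vector `η` and bias `b`. -/
def Hyp {d : ℕ} (η : EuclideanSpace ℝ (Fin d)) (b : ℝ) : Set (EuclideanSpace ℝ (Fin d)) :=
  {z | ⟪η, z⟫ + b = 0}

/-- `A` is an affine flat of dimension `m`: a coset of an `m`-dimensional subspace. -/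
def IsFlatOfDim {d : ℕ} (A : Set (EuclideanSpace ℝ (Fin d))) (m : ℕ) : Prop :=
  ∃ (v : EuclideanSpace ℝ (Fin d)) (S : Submodule ℝ (EuclideanSpace ℝ (Fin d))),
    Module.finrank ℝ S = m ∧ A = v +ᵥ (S : Set (EuclideanSpace ℝ (Fin d)))

/-- The arrangement of the `n` hyperplanes `⟪η i, z⟫ + b i = 0` in `ℝ^d` is in
`d'`-relaxed general position: every nonempty subset of `k ≤ d'` of the hyperplanes
intersects in a nonempty affine flat of dimension `d - k`, and every subset of more
than `d'` hyperplanes has empty intersection. -/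
def RelaxedGeneralPosition {d n : ℕ} (d' : ℕ) (η : Fin n → EuclideanSpace ℝ (Fin d))
    (b : Fin n → ℝ) : Prop :=
  (∀ i, η i ≠ 0) ∧
  (∀ T : Finset (Fin n), T.Nonempty → T.card ≤ d' →
    IsFlatOfDim (⋂ i ∈ T, Hyp (η i) (b i)) (d - T.card)) ∧
  (∀ T : Finset (Fin n), d' < T.card → (⋂ i ∈ T, Hyp (η i) (b i)) = ∅)


/-
Pick a point `x` of `F = ⋂_{i ∈ T} hᵢ`; then `F = x + W` with `W = (span η(T))ᗮ`, so general
position says `dim W = d - |T|`, i.e. the normals in `T` are independent. Any `d'` normals span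
all of them: a normal `η j` outside their span has some `q ∈ W` with `⟪η j, q⟫ ≠ 0`, and moving
from `x` along `q` reaches `h_j` inside `F`, giving a nonempty `(d'+1)`-fold intersection. Hence
`dim N = d'`. As `span η(T) ≤ N` we get `W ⊔ N = ⊤`, and `F ∩ N = p + (W ⊓ N)` for `p` the
orthogonal projection of `x` onto `N`, of dimension `(d - |T|) + d' - d`.
-/

open Submodule

section Cosets

variable {R E : Type*} [Ring R] [AddCommGroup E] [Module R E]

theorem Submodule.vadd_coe_eq_vadd_coe_iff {v w : E} {S : Submodule R E} :
    v +ᵥ (S : Set E) = w +ᵥ (S : Set E) ↔ -v + w ∈ S :=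
  leftAddCoset_eq_iff S.toAddSubgroup

theorem Submodule.eq_of_vadd_coe_eq_vadd_coe {v w : E} {S W : Submodule R E}
    (h : v +ᵥ (S : Set E) = w +ᵥ (W : Set E)) : S = W := by
  have hv : v ∈ w +ᵥ (W : Set E) := h ▸ by simpa using Set.vadd_mem_vadd_set (a := v) S.zero_mem
  have hW : w +ᵥ (W : Set E) = v +ᵥ (W : Set E) := by
    rw [vadd_coe_eq_vadd_coe_iff]
    rwa [Set.mem_vadd_set_iff_neg_vadd_mem] at hv
  apply SetLike.coe_injective
  simpa using congrArg (-v +ᵥ ·) (h.trans hW)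

theorem Submodule.vadd_coe_inter_coe {x p : E} {W N : Submodule R E} (hxp : x - p ∈ W)
    (hp : p ∈ N) : (x +ᵥ (W : Set E)) ∩ N = p +ᵥ ((W ⊓ N : Submodule R E) : Set E) := by
  have hW : x +ᵥ (W : Set E) = p +ᵥ (W : Set E) := by
    rw [vadd_coe_eq_vadd_coe_iff, ← W.neg_mem_iff]
    simpa [sub_eq_add_neg, add_comm] using hxp
  rw [hW, coe_inf, Set.vadd_set_inter]
  exact congrArg _ (leftAddCoset_mem_leftAddCoset N.toAddSubgroup hp).symm

end Cosets

section InnerProductSpace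

variable {𝕜 E : Type*} [RCLike 𝕜] [NormedAddCommGroup E] [InnerProductSpace 𝕜 E]

theorem Submodule.mem_orthogonal_span_iff {s : Set E} {v : E} :
    v ∈ (span 𝕜 s)ᗮ ↔ ∀ u ∈ s, inner 𝕜 u v = 0 := by
  rw [← span_singleton_le_iff_mem, ← isOrtho_iff_le, isOrtho_comm, isOrtho_span]
  simp

theorem Submodule.exists_mem_orthogonal_inner_ne_zero [FiniteDimensional 𝕜 E] {K : Submodule 𝕜 E}
    {v : E} (hv : v ∉ K) : ∃ q ∈ Kᗮ, inner 𝕜 v q ≠ 0 := by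
  contrapose! hv
  rw [← K.orthogonal_orthogonal, mem_orthogonal']
  exact hv

end InnerProductSpace

variable {d n : ℕ}

theorem iInter_hyp_eq_vadd_orthogonal (η : Fin n → EuclideanSpace ℝ (Fin d)) (b : Fin n → ℝ)
    (T : Finset (Fin n)) {x : EuclideanSpace ℝ (Fin d)} (hx : x ∈ ⋂ i ∈ T, Hyp (η i) (b i)) :
    ⋂ i ∈ T, Hyp (η i) (b i) = x +ᵥ ((span ℝ (η '' T))ᗮ : Set (EuclideanSpace ℝ (Fin d))) := by
  simp only [Set.mem_iInter, Hyp, Set.mem_ofPred_eq] at hx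
  ext z
  simp only [Set.mem_vadd_set_iff_neg_vadd_mem, vadd_eq_add, SetLike.mem_coe,
    mem_orthogonal_span_iff, Set.forall_mem_image, Set.mem_iInter, Hyp, Set.mem_ofPred_eq,
    inner_add_right, inner_neg_right]
  refine forall₂_congr fun i hi => ?_
  constructor <;> intro h <;> linarith [hx i hi]

theorem add_smul_mem_hyp {η q : EuclideanSpace ℝ (Fin d)} (hq : ⟪η, q⟫ ≠ 0) (b : ℝ)
    (x : EuclideanSpace ℝ (Fin d)) : x + (-(⟪η, x⟫ + b) / ⟪η, q⟫) • q ∈ Hyp η b := by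
  simp only [Hyp, Set.mem_ofPred_eq, inner_add_right, real_inner_smul_right]
  field_simp
  ring

theorem IsFlatOfDim.nonempty {A : Set (EuclideanSpace ℝ (Fin d))} {m : ℕ} (h : IsFlatOfDim A m) :
    A.Nonempty := by
  obtain ⟨v, S, -, rfl⟩ := h
  exact ⟨v, by simpa using Set.vadd_mem_vadd_set (a := v) S.zero_mem⟩

namespace RelaxedGeneralPosition

variable {d' : ℕ} {η : Fin n → EuclideanSpace ℝ (Fin d)} {b : Fin n → ℝ}

theorem nonempty_iInter (hH : RelaxedGeneralPosition d' η b) {T : Finset (Fin n)}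
    (hT : T.Nonempty) (hTcard : T.card ≤ d') : (⋂ i ∈ T, Hyp (η i) (b i)).Nonempty :=
  (hH.2.1 T hT hTcard).nonempty

theorem finrank_orthogonal_span_image (hH : RelaxedGeneralPosition d' η b) {T : Finset (Fin n)}
    (hT : T.Nonempty) (hTcard : T.card ≤ d') :
    Module.finrank ℝ (span ℝ (η '' T))ᗮ = d - T.card := by
  obtain ⟨v, S, hS, hF⟩ := hH.2.1 T hT hTcard
  obtain ⟨x, hx⟩ := hH.nonempty_iInter hT hTcard
  rw [← hS, eq_of_vadd_coe_eq_vadd_coe (hF.symm.trans (iInter_hyp_eq_vadd_orthogonal η b T hx))]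

theorem finrank_span_image (hd : d' ≤ d) (hH : RelaxedGeneralPosition d' η b)
    {T : Finset (Fin n)} (hT : T.Nonempty) (hTcard : T.card ≤ d') :
    Module.finrank ℝ (span ℝ (η '' T)) = T.card := by
  have := (span ℝ (η '' T)).finrank_add_finrank_orthogonal
  rw [hH.finrank_orthogonal_span_image hT hTcard, finrank_euclideanSpace_fin] at this
  omega

theorem mem_span_image_of_card_eq (hH : RelaxedGeneralPosition d' η b) {T : Finset (Fin n)}
    (hT : T.Nonempty) (hTcard : T.card = d') (j : Fin n) : η j ∈ span ℝ (η '' T) := by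
  by_contra hj
  have hjT : j ∉ T := fun h => hj (subset_span ⟨j, h, rfl⟩)
  obtain ⟨x, hx⟩ := hH.nonempty_iInter hT hTcard.le
  obtain ⟨q, hqT, hqj⟩ := exists_mem_orthogonal_inner_ne_zero hj
  set z := x + (-(⟪η j, x⟫ + b j) / ⟪η j, q⟫) • q
  have hzT : z ∈ ⋂ i ∈ T, Hyp (η i) (b i) := by
    rw [iInter_hyp_eq_vadd_orthogonal η b T hx]
    exact Set.vadd_mem_vadd_set (smul_mem _ _ hqT)
  have hz : z ∈ ⋂ i ∈ insert j T, Hyp (η i) (b i) := by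
    rw [Finset.set_biInter_insert]
    exact ⟨add_smul_mem_hyp hqj (b j) x, hzT⟩
  rw [hH.2.2 _ (by rw [Finset.card_insert_of_notMem hjT]; omega)] at hz
  exact hz

theorem finrank_span_range (hd : d' ≤ d) (hn : d' ≤ n) (hd' : 0 < d')
    (hH : RelaxedGeneralPosition d' η b) : Module.finrank ℝ (span ℝ (Set.range η)) = d' := by
  obtain ⟨T, -, hTcard⟩ := (Finset.univ : Finset (Fin n)).exists_subset_card_eq
    (by simpa using hn)
  have hT : T.Nonempty := Finset.card_pos.mp (hTcard ▸ hd')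
  have hspan : span ℝ (Set.range η) = span ℝ (η '' T) :=
    le_antisymm (span_le.mpr (Set.range_subset_iff.mpr (hH.mem_span_image_of_card_eq hT hTcard)))
      (span_mono (Set.image_subset_range _ _))
  rw [hspan, hH.finrank_span_image hd hT hTcard.le, hTcard]

end RelaxedGeneralPosition

/-- For an arrangement in `d'`-relaxed general position with `N` the span of the
normals, the intersection of any `1 ≤ k ≤ d'` of the hyperplanes, intersected with `N`,
is an affine flat of dimension `d' - k`. -/
theorem dim_inter_with_span {d n d' : ℕ} (hd : d' ≤ d) (hn : d' ≤ n)
    (η : Fin n → EuclideanSpace ℝ (Fin d)) (b : Fin n → ℝ)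
    (hH : RelaxedGeneralPosition d' η b)
    (N : Submodule ℝ (EuclideanSpace ℝ (Fin d)))
    (hN : N = Submodule.span ℝ (Set.range η))
    (T : Finset (Fin n)) (hT : T.Nonempty) (hTcard : T.card ≤ d') :
    IsFlatOfDim ((⋂ i ∈ T, Hyp (η i) (b i)) ∩ (N : Set (EuclideanSpace ℝ (Fin d))))
      (d' - T.card) := by
  set W := (span ℝ (η '' T))ᗮ
  obtain ⟨x, hx⟩ := hH.nonempty_iInter hT hTcard
  have hMN : span ℝ (η '' T) ≤ N := hN ▸ span_mono (Set.image_subset_range _ _)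
  have hsup : W ⊔ N = ⊤ := by
    rw [eq_top_iff, ← sup_orthogonal_of_hasOrthogonalProjection (K := span ℝ (η '' T)), sup_comm]
    exact sup_le_sup_left hMN _
  have hNrank : Module.finrank ℝ N = d' :=
    hN ▸ hH.finrank_span_range hd hn (hT.card_pos.trans_le hTcard)
  have hdim := finrank_sup_add_finrank_inf_eq W N
  rw [hsup, finrank_top, finrank_euclideanSpace_fin, hH.finrank_orthogonal_span_image hT hTcard,
    hNrank] at hdim
  refine ⟨N.starProjection x, W ⊓ N, by omega, ?_⟩
  rw [iInter_hyp_eq_vadd_orthogonal η b T hx]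
  exact vadd_coe_inter_coe (orthogonal_le hMN (N.sub_starProjection_mem_orthogonal x))
    (N.starProjection_apply_mem x)
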